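/- arXiv:1109.1349 — 2 statements merged into one kernel-verified Lean document; each statement's English description precedes it below -/
import Mathlib

section
/- Let ρ_AB be a density operator on H_A ⊗ H_B with dim H_B = N. If rank ρ_AB < N and ρ_B = Tr_A ρ_AB has rank N, then ρ_AB is entangled (not separable). -/
open Matrix
open scoped ComplexOrder

/-- Partial trace over the first (A) factor. -/
noncomputable def ptraceA {a b : Type*} [Fintype a] [Fintype b]
    (ρ : Matrix (a × b) (a × b) ℂ) : Matrix b b ℂ :=
  fun j l => ∑ i : a, ρ (i, j) (i, l)

/-- The rank-one product projector |u⟩⟨u| ⊗ |v⟩⟨v|. -/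
noncomputable def prodProj {a b : Type*} (u : a → ℂ) (v : b → ℂ) :
    Matrix (a × b) (a × b) ℂ :=
  fun x y => (u x.1 * v x.2) * star (u y.1 * v y.2)

/-- ρ_AB is separable: a finite convex combination of pure product states. -/
def SeparableState {a b : Type*} [Fintype a] [Fintype b]
    (ρ : Matrix (a × b) (a × b) ℂ) : Prop :=
  ∃ (n : ℕ) (p : Fin n → ℝ) (u : Fin n → a → ℂ) (v : Fin n → b → ℂ),
    (∀ i, 0 ≤ p i) ∧ (∑ i, p i = 1) ∧
    (∀ i, ∑ x, Complex.normSq (u i x) = 1) ∧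
    (∀ i, ∑ x, Complex.normSq (v i x) = 1) ∧
    ρ = ∑ i, (p i : ℂ) • prodProj (u i) (v i)

/-!
Write a separable state as `ρ = ∑ pᵢ |uᵢ ⊗ vᵢ⟩⟨uᵢ ⊗ vᵢ|`. Then `ρ = M Mᴴ` where the columns of `M`
are the vectors `√pᵢ uᵢ ⊗ vᵢ`, so `rank ρ` is the dimension of their span; since the `uᵢ` are unit
vectors, `ρ_B = ∑ pᵢ |vᵢ⟩⟨vᵢ|` and `rank ρ_B` is the dimension of the span of the `√pᵢ vᵢ`.
Tensoring with nonzero vectors preserves linear independence (evaluate at a coordinate where `uᵢ`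
does not vanish), so `rank ρ_B ≤ rank ρ`, contradicting `rank ρ < N = rank ρ_B`.
-/

open Module Submodule

theorem Matrix.rank_sum_vecMulVec_star {ι n R : Type*} [Fintype ι] [Fintype n] [Field R]
    [PartialOrder R] [StarRing R] [StarOrderedRing R] (w : ι → n → R) :
    (∑ i, vecMulVec (w i) (star (w i))).rank = finrank R (span R (Set.range w)) := by
  have hfactor : ∑ i, vecMulVec (w i) (star (w i)) = (of w)ᵀ * (of w)ᵀᴴ := by
    ext x y
    simp [mul_apply, vecMulVec_apply, Matrix.sum_apply]
  rw [hfactor, rank_self_mul_conjTranspose, rank_eq_finrank_span_cols]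
  rfl

theorem Matrix.sum_smul_vecMulVec_star_eq {ι n : Type*} [Fintype ι] {p : ι → ℝ} (hp : ∀ i, 0 ≤ p i)
    (w : ι → n → ℂ) :
    ∑ i, (p i : ℂ) • vecMulVec (w i) (star (w i)) =
      ∑ i, vecMulVec ((√(p i) : ℂ) • w i) (star ((√(p i) : ℂ) • w i)) := by
  refine Finset.sum_congr rfl fun i _ => ?_
  rw [star_smul, smul_vecMulVec, vecMulVec_smul, smul_smul, Complex.star_def, Complex.conj_ofReal,
    ← Complex.ofReal_mul, Real.mul_self_sqrt (hp i)]

def prodVec {a b R : Type*} [Mul R] (u : a → R) (v : b → R) : a × b → R :=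
  fun x => u x.1 * v x.2

theorem smul_prodVec {a b R : Type*} [CommSemigroup R] (c : R) (u : a → R) (v : b → R) :
    c • prodVec u v = prodVec u (c • v) := by
  funext x
  exact mul_left_comm c (u x.1) (v x.2)

theorem LinearIndependent.prodVec {ι a b K : Type*} [Field K] {u : ι → a → K} {v : ι → b → K}
    (hv : LinearIndependent K v) (hu : ∀ i, u i ≠ 0) :
    LinearIndependent K fun i => prodVec (u i) (v i) := by
  rw [linearIndependent_iff'] at hv ⊢
  intro s g hg i hi
  obtain ⟨x, hx⟩ := Function.ne_iff.mp (hu i)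
  have hslice : ∑ j ∈ s, (g j * u j x) • v j = 0 := by
    funext y
    simpa [Finset.sum_apply, _root_.prodVec, mul_assoc] using congrFun hg (x, y)
  exact (mul_eq_zero.mp (hv s _ hslice i hi)).resolve_right hx

theorem finrank_span_le_finrank_span_prodVec {ι a b K : Type*} [Finite ι] [Field K]
    {u : ι → a → K} {v : ι → b → K} (hu : ∀ i, u i ≠ 0) :
    finrank K (span K (Set.range v)) ≤
      finrank K (span K (Set.range fun i => prodVec (u i) (v i))) := by
  obtain ⟨κ, e, he, hspan, hli⟩ := exists_linearIndependent' K v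
  have : Finite κ := Finite.of_injective e he
  have : Fintype κ := Fintype.ofFinite κ
  rw [← hspan, finrank_span_eq_card hli,
    ← finrank_span_eq_card (hli.prodVec fun k => hu (e k))]
  set w := fun i => prodVec (u i) (v i)
  have : FiniteDimensional K (span K (Set.range w)) :=
    FiniteDimensional.span_of_finite K (Set.finite_range w)
  exact Submodule.finrank_mono (span_mono (Set.range_comp_subset_range e w))

theorem ptraceA_sum_smul {ι a b : Type*} [Fintype ι] [Fintype a] [Fintype b] (c : ι → ℂ)
    (M : ι → Matrix (a × b) (a × b) ℂ) :
    ptraceA (∑ i, c i • M i) = ∑ i, c i • ptraceA (M i) := by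
  ext j l
  simp only [ptraceA, Matrix.sum_apply, Matrix.smul_apply, smul_eq_mul, Finset.mul_sum]
  exact Finset.sum_comm

theorem ptraceA_prodProj {a b : Type*} [Fintype a] [Fintype b] (u : a → ℂ) (v : b → ℂ) :
    ptraceA (prodProj u v) = (∑ x, (Complex.normSq (u x) : ℂ)) • vecMulVec v (star v) := by
  ext j l
  simp only [ptraceA, prodProj, Matrix.smul_apply, vecMulVec_apply, smul_eq_mul, Finset.sum_mul,
    Pi.star_apply, star_mul', Complex.normSq_eq_conj_mul_self, Complex.star_def]
  exact Finset.sum_congr rfl fun x _ => by ring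

theorem prodProj_eq_vecMulVec {a b : Type*} (u : a → ℂ) (v : b → ℂ) :
    prodProj u v = vecMulVec (prodVec u v) (star (prodVec u v)) := rfl

theorem SeparableState.rank_ptraceA_le {a b : Type*} [Fintype a] [Fintype b]
    {ρ : Matrix (a × b) (a × b) ℂ} (hρ : SeparableState ρ) : (ptraceA ρ).rank ≤ ρ.rank := by
  obtain ⟨n, p, u, v, hp, -, hu, -, rfl⟩ := hρ
  have hu0 : ∀ i, u i ≠ 0 := fun i h => by simpa [h] using hu i
  have hrank : (∑ i, (p i : ℂ) • prodProj (u i) (v i)).rank =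
      finrank ℂ (span ℂ (Set.range fun i => prodVec (u i) ((√(p i) : ℂ) • v i))) := by
    simp_rw [prodProj_eq_vecMulVec]
    rw [sum_smul_vecMulVec_star_eq hp, rank_sum_vecMulVec_star]
    have hsmul : (fun i => (√(p i) : ℂ) • prodVec (u i) (v i)) =
        fun i => prodVec (u i) ((√(p i) : ℂ) • v i) :=
      funext fun i => smul_prodVec _ _ _
    rw [hsmul]
  have hrankB : (ptraceA (∑ i, (p i : ℂ) • prodProj (u i) (v i))).rank =
      finrank ℂ (span ℂ (Set.range fun i => (√(p i) : ℂ) • v i)) := by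
    simp_rw [ptraceA_sum_smul, ptraceA_prodProj, ← Complex.ofReal_sum, hu, Complex.ofReal_one,
      one_smul]
    rw [sum_smul_vecMulVec_star_eq hp, rank_sum_vecMulVec_star]
  rw [hrank, hrankB]
  exact finrank_span_le_finrank_span_prodVec hu0

theorem low_rank_full_marginal_entangled_general {a b : Type*} [Fintype a] [Fintype b]
    (ρ : Matrix (a × b) (a × b) ℂ)
    (hrank : ρ.rank < Fintype.card b)
    (hB : (ptraceA ρ).rank = Fintype.card b) :
    ¬ SeparableState ρ := fun hsep =>
  hsep.rank_ptraceA_le.not_gt (hB ▸ hrank)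

/-- If rank ρ_AB < dim H_B while the B-marginal has full rank N = dim H_B,
then ρ_AB is entangled (not separable). -/
theorem low_rank_full_marginal_entangled {a b : Type*} [Fintype a] [Fintype b]
    [DecidableEq a] [DecidableEq b]
    (ρ : Matrix (a × b) (a × b) ℂ) (hρ : ρ.PosSemidef) (htr : ρ.trace = 1)
    (hrank : ρ.rank < Fintype.card b)
    (hB : (ptraceA ρ).rank = Fintype.card b) :
    ¬ SeparableState ρ :=
  low_rank_full_marginal_entangled_general ρ hrank hB
end

section
/- A maximally correlated state ρ = Σ_{i,j} c_{ij} |ii⟩⟨jj| is PPT (has positive semidefinite partial transpose) if and only if c_{ij} = 0 for all i ≠ j. -/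
/-!
The partial transpose of `maxCorr c` has the entry `c i j` at `((i, j), (j, i))` while its
diagonal entry at `(i, j)` vanishes for `i ≠ j`; a positive semidefinite matrix with a zero
diagonal entry has the whole row zero. Conversely, for diagonal `c` the partial transpose fixes
`maxCorr c`, which is `D (c.submatrix fst fst) D` for the projection `D` onto the span of the
`|ii⟩`, hence positive semidefinite.
-/

open Matrix
open scoped ComplexOrder

/-- Partial transpose with respect to the second (B) factor. -/
def ptransposeB {a b : Type*} [Fintype a] [Fintype b]
    (ρ : Matrix (a × b) (a × b) ℂ) : Matrix (a × b) (a × b) ℂ :=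
  fun p q => ρ (p.1, q.2) (q.1, p.2)

/-- The maximally correlated state ρ = Σ_{i,j} c_{ij} |ii⟩⟨jj|. -/
noncomputable def maxCorr {d : ℕ} (c : Matrix (Fin d) (Fin d) ℂ) :
    Matrix (Fin d × Fin d) (Fin d × Fin d) ℂ :=
  fun p q => if p.2 = p.1 ∧ q.2 = q.1 then c p.1 q.1 else 0

-- The 2 × 2 principal minor on `{p, q}` is `-‖M p q‖²`, and it is nonnegative.
theorem Matrix.PosSemidef.apply_eq_zero_of_apply_self_eq_zero {𝕜 n : Type*} [RCLike 𝕜]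
    [Fintype n] {M : Matrix n n 𝕜} (hM : M.PosSemidef) {p : n} (hp : M p p = 0) (q : n) :
    M p q = 0 := by
  have hminor := (hM.submatrix ![p, q]).det_nonneg
  simp only [det_fin_two, submatrix_apply, Matrix.cons_val_zero, Matrix.cons_val_one, hp,
    zero_mul, zero_sub, neg_nonneg, ← hM.isHermitian.apply q p] at hminor
  exact (CStarRing.mul_star_self_eq_zero_iff _).mp (le_antisymm hminor (mul_star_self_nonneg _))

section maxCorr

variable {d : ℕ} {c : Matrix (Fin d) (Fin d) ℂ}

theorem ptransposeB_maxCorr_apply (p q : Fin d × Fin d) :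
    ptransposeB (maxCorr c) p q = if q = p.swap then c p.1 p.2 else 0 := by
  obtain ⟨p₁, p₂⟩ := p
  obtain ⟨q₁, q₂⟩ := q
  simp only [ptransposeB, maxCorr, Prod.swap_prod_mk, Prod.mk.injEq]
  grind

theorem maxCorr_posSemidef (hc : c.PosSemidef) : (maxCorr c).PosSemidef := by
  let D : Matrix (Fin d × Fin d) (Fin d × Fin d) ℂ := diagonal fun p => if p.2 = p.1 then 1 else 0
  have hD : maxCorr c = Dᴴ * c.submatrix Prod.fst Prod.fst * D := by
    ext p q
    simp only [D, diagonal_conjTranspose, diagonal_mul, mul_diagonal, maxCorr, submatrix_apply]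
    split_ifs <;> simp_all
  exact hD ▸ (hc.submatrix Prod.fst).conjTranspose_mul_mul_same D

theorem ptransposeB_maxCorr_eq_self (hc : c.IsDiag) : ptransposeB (maxCorr c) = maxCorr c := by
  ext ⟨p₁, p₂⟩ ⟨q₁, q₂⟩
  rw [ptransposeB_maxCorr_apply]
  simp only [maxCorr, Prod.swap_prod_mk, Prod.mk.injEq]
  have hc₁ : p₁ ≠ p₂ → c p₁ p₂ = 0 := @hc p₁ p₂
  have hc₂ : p₁ ≠ q₁ → c p₁ q₁ = 0 := @hc p₁ q₁
  grind

theorem isDiag_of_posSemidef_ptransposeB_maxCorr (h : (ptransposeB (maxCorr c)).PosSemidef) :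
    c.IsDiag := by
  intro i j hij
  have hdiag : ptransposeB (maxCorr c) (i, j) (i, j) = 0 := by
    simp [ptransposeB_maxCorr_apply, hij]
  simpa [ptransposeB_maxCorr_apply] using h.apply_eq_zero_of_apply_self_eq_zero hdiag (j, i)

end maxCorr

theorem maxCorr_ppt_iff_diagonal_general {d : ℕ}
    (c : Matrix (Fin d) (Fin d) ℂ) (hc : c.PosSemidef) :
    (ptransposeB (maxCorr c)).PosSemidef ↔ ∀ i j, i ≠ j → c i j = 0 :=
  ⟨isDiag_of_posSemidef_ptransposeB_maxCorr,
    fun h => ptransposeB_maxCorr_eq_self h ▸ maxCorr_posSemidef hc⟩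

/-- A maximally correlated state Σ_{i,j} c_{ij}|ii⟩⟨jj| is PPT if and only if all
off-diagonal entries of (c_{ij}) vanish. -/
theorem maxCorr_ppt_iff_diagonal {d : ℕ}
    (c : Matrix (Fin d) (Fin d) ℂ) (hc : c.PosSemidef) (htr : c.trace = 1) :
    (ptransposeB (maxCorr c)).PosSemidef ↔ ∀ i j, i ≠ j → c i j = 0 :=
  maxCorr_ppt_iff_diagonal_general c hc
end
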